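/- arXiv:1811.11322 — 7 statements merged into one kernel-verified Lean document; each statement's English description precedes it below -/
import Mathlib

section
/- Let I be a finite index set of routes, where route i has start time s_i ∈ ℝ and end time e_i ∈ ℝ with s_i < e_i, and is in operation on [s_i, e_i). Let k be the maximum over t ∈ ℝ of the number of routes i ∈ I with t ∈ [s_i, e_i). Then there exists a feasible assignment of the routes to k buses, i.e., a function f : I → Fin k such that any two distinct routes assigned to the same bus have disjoint operation intervals. -/
/-- Greedy coloring: color `m` with a color not used by any earlier overlapping index. -/
noncomputable def greedyColor (n k : ℕ) (hk : 0 < k) (ov : Fin n → Fin n → Prop)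
    [DecidableRel ov] : Fin n → Fin k
  | m =>
    let used : Finset (Fin k) :=
      (Finset.univ.filter (fun m' : Fin n => m' < m ∧ ov m' m)).attach.image
        (fun m' => greedyColor n k hk ov m'.1)
    if h : ∃ c, c ∉ used then h.choose else ⟨0, hk⟩
termination_by m => m.val
decreasing_by exact (Finset.mem_filter.mp m'.2).2.1

lemma greedyColor_ne (n k : ℕ) (hk : 0 < k) (ov : Fin n → Fin n → Prop)
    [DecidableRel ov] (m m' : Fin n) (hlt : m' < m) (hov : ov m' m)
    (hcard : (Finset.univ.filter (fun x : Fin n => x < m ∧ ov x m)).card < k) :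
    greedyColor n k hk ov m ≠ greedyColor n k hk ov m' := by
  rw [greedyColor]
  set F := Finset.univ.filter (fun x : Fin n => x < m ∧ ov x m) with hF
  set used : Finset (Fin k) :=
    F.attach.image (fun m' => greedyColor n k hk ov m'.1) with hused
  have hcardu : used.card < Fintype.card (Fin k) := by
    calc used.card ≤ F.attach.card := Finset.card_image_le
    _ = F.card := Finset.card_attach
    _ < k := hcard
    _ = Fintype.card (Fin k) := (Fintype.card_fin k).symm
  have hex : ∃ c, c ∉ used := by
    rw [← Finset.card_univ] at hcardu
    exact (Finset.exists_of_ssubset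
      (Finset.ssubset_univ_iff.mpr (by intro h; rw [h] at hcardu; simp at hcardu))).imp
      (fun a ⟨_, h⟩ => h)
  rw [dif_pos hex]
  have hmem : greedyColor n k hk ov m' ∈ used := by
    refine Finset.mem_image.mpr ⟨⟨m', ?_⟩, Finset.mem_attach _ _, rfl⟩
    simp [hF, hlt, hov]
  intro hcontra
  exact hex.choose_spec (hcontra ▸ hmem)

/-- Upper-bound direction of Proposition 1: if `k` is the maximum number of routes
simultaneously in operation, then there is a feasible assignment of the routes to `k` buses. -/
theorem exists_feasible_assignment_with_max_simultaneous_routes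
    {I : Type*} [Fintype I] (s e : I → ℝ) (hse : ∀ i, s i < e i)
    (k : ℕ)
    (hk : k = sSup {n : ℕ | ∃ t : ℝ,
        n = (Finset.univ.filter (fun i : I => s i ≤ t ∧ t < e i)).card}) :
    ∃ f : I → Fin k, ∀ i j : I, i ≠ j → f i = f j →
      Disjoint (Set.Ico (s i) (e i)) (Set.Ico (s j) (e j)) := by
  rcases isEmpty_or_nonempty I with hI | hI
  · exact ⟨fun i => isEmptyElim i, fun i => isEmptyElim i⟩
  classical
  set S : Set ℕ := {n : ℕ | ∃ t : ℝ,
      n = (Finset.univ.filter (fun i : I => s i ≤ t ∧ t < e i)).card} with hS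
  have hbdd : BddAbove S := by
    refine ⟨Fintype.card I, fun n hn => ?_⟩
    obtain ⟨t, rfl⟩ := hn
    exact (Finset.card_filter_le _ _).trans_eq (Finset.card_univ)
  -- every "count at time t" is ≤ k
  have hle : ∀ t : ℝ, (Finset.univ.filter (fun i : I => s i ≤ t ∧ t < e i)).card ≤ k := by
    intro t
    rw [hk]
    exact le_csSup hbdd ⟨t, rfl⟩
  have hkpos : 0 < k := by
    obtain ⟨i₀⟩ := hI
    have h1 : 1 ≤ (Finset.univ.filter (fun i : I => s i ≤ s i₀ ∧ s i₀ < e i)).card := by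
      refine Finset.card_pos.mpr ⟨i₀, ?_⟩
      simp [le_refl, hse i₀]
    exact lt_of_lt_of_le h1 (hle (s i₀))
  -- sort by start time
  set n := Fintype.card I with hn
  set ε : I ≃ Fin n := Fintype.equivFin I with hε
  set σ : Equiv.Perm (Fin n) := Tuple.sort (fun m => s (ε.symm m)) with hσ
  set a : Fin n → I := fun m => ε.symm (σ m) with ha
  have hainj : Function.Injective a := ε.symm.injective.comp σ.injective
  have hmono : Monotone (fun m => s (a m)) := Tuple.monotone_sort (fun m => s (ε.symm m))
  set ov : Fin n → Fin n → Prop :=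
    fun m' m => s (a m') ≤ s (a m) ∧ s (a m) < e (a m') with hov
  have : DecidableRel ov := Classical.decRel ov
  set g : Fin n → Fin k := greedyColor n k hkpos ov with hg
  refine ⟨fun i => g (σ.symm (ε i)), ?_⟩
  intro i j hij hfij
  by_contra hdisj
  -- get a common time
  obtain ⟨t, hti, htj⟩ := Set.not_disjoint_iff.mp hdisj
  set p := σ.symm (ε i) with hp
  set q := σ.symm (ε j) with hq
  have hai : a p = i := by simp [ha, hp]
  have haj : a q = j := by simp [ha, hq]
  have hpq : p ≠ q := by
    intro h
    exact hij (by rw [← hai, ← haj, h])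
  -- the count bound at the start time of the later interval
  have key : ∀ x y : Fin n, x < y →
      (Finset.univ.filter (fun z : Fin n => z < y ∧ ov z y)).card < k := by
    intro x y hxy
    have hsub : (Finset.univ.filter (fun z : Fin n => z < y ∧ ov z y)).image a ⊂
        Finset.univ.filter (fun i : I => s i ≤ s (a y) ∧ s (a y) < e i) := by
      constructor
      · intro w hw
        obtain ⟨z, hz, rfl⟩ := Finset.mem_image.mp hw
        have hzy := (Finset.mem_filter.mp hz).2
        have h1 : s (a z) ≤ s (a y) := hzy.2.1
        have h2 : s (a y) < e (a z) := hzy.2.2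
        simp [h1, h2]
      · intro hsup
        have hay : a y ∈ Finset.univ.filter
            (fun i : I => s i ≤ s (a y) ∧ s (a y) < e i) := by
          simp [le_refl, hse (a y)]
        obtain ⟨z, hz, hzz⟩ := Finset.mem_image.mp (hsup hay)
        have := hainj hzz
        subst this
        have := (Finset.mem_filter.mp hz).2.1
        exact absurd this (lt_irrefl z)
    calc (Finset.univ.filter (fun z : Fin n => z < y ∧ ov z y)).card
        = ((Finset.univ.filter (fun z : Fin n => z < y ∧ ov z y)).image a).card :=
          (Finset.card_image_of_injective _ hainj).symm
      _ < (Finset.univ.filter (fun i : I => s i ≤ s (a y) ∧ s (a y) < e i)).card :=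
          Finset.card_lt_card hsub
      _ ≤ k := hle _
  rcases lt_trichotomy p q with hlt | heq | hlt
  · -- p < q : i starts earlier, both intervals contain t; s j ≤ t < e i
    have hov' : ov p q := by
      refine ⟨hmono hlt.le, ?_⟩
      rw [hai, haj]
      exact lt_of_le_of_lt htj.1 hti.2
    exact greedyColor_ne n k hkpos ov q p hlt hov' (key p q hlt) hfij.symm
  · exact hpq heq
  · have hov' : ov q p := by
      refine ⟨hmono hlt.le, ?_⟩
      rw [hai, haj]
      exact lt_of_le_of_lt hti.1 htj.2
    exact greedyColor_ne n k hkpos ov p q hlt hov' (key q p hlt) hfij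
end

section
/- (Time-indexed version of Proposition 1.) Let I be a nonempty finite index set of routes, where route i has an arrival period t_i ∈ ℤ and a duration r_i ∈ ℕ with r_i ≥ 1, and is in operation during the r_i consecutive integer periods t_i − r_i + 1, …, t_i. Then the minimum natural number k for which there exists a function f : I → Fin k such that no two distinct routes assigned to the same bus are in operation during a common period is equal to the maximum over m ∈ ℤ of the number of routes i ∈ I with t_i − r_i + 1 ≤ m ≤ t_i. -/
lemma greedy_color_aux {I : Type*} [Fintype I] [DecidableEq I]
    (t : I → ℤ) (r : I → ℕ) (hr : ∀ i, 1 ≤ r i) (N : ℕ) (hN : 0 < N)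
    (hcount : ∀ m : ℤ,
      (Finset.univ.filter (fun i : I => t i - (r i : ℤ) + 1 ≤ m ∧ m ≤ t i)).card ≤ N) :
    ∀ s : Finset I, ∃ f : I → Fin N, ∀ i ∈ s, ∀ j ∈ s, i ≠ j → f i = f j →
      Disjoint (Finset.Icc (t i - (r i : ℤ) + 1) (t i))
        (Finset.Icc (t j - (r j : ℤ) + 1) (t j)) := by
  intro s
  induction s using Finset.strongInduction with
  | _ s ih =>
    rcases s.eq_empty_or_nonempty with hs | hs
    · subst hs
      exact ⟨fun _ => ⟨0, hN⟩, fun i hi => absurd hi (by simp)⟩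
    · -- pick i0 with maximal left endpoint
      obtain ⟨i0, hi0s, hi0max⟩ :=
        s.exists_max_image (fun i => t i - (r i : ℤ) + 1) hs
      set s' := s.erase i0 with hs'
      obtain ⟨f', hf'⟩ := ih s' (Finset.erase_ssubset hi0s)
      set m0 : ℤ := t i0 - (r i0 : ℤ) + 1 with hm0
      -- neighbors of i0 in s'
      set Nb : Finset I := s'.filter (fun j =>
        ¬ Disjoint (Finset.Icc (t j - (r j : ℤ) + 1) (t j))
          (Finset.Icc (t i0 - (r i0 : ℤ) + 1) (t i0))) with hNb
      -- each neighbor contains m0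
      have hNbsub : Nb ⊆ (Finset.univ.filter
          (fun i : I => t i - (r i : ℤ) + 1 ≤ m0 ∧ m0 ≤ t i)).erase i0 := by
        intro j hj
        rw [hNb, Finset.mem_filter] at hj
        obtain ⟨hjs', hjnd⟩ := hj
        have hjne : j ≠ i0 := Finset.ne_of_mem_erase hjs'
        have hjl : t j - (r j : ℤ) + 1 ≤ m0 := hi0max j (Finset.mem_of_mem_erase hjs')
        rw [Finset.not_disjoint_iff] at hjnd
        obtain ⟨x, hx1, hx2⟩ := hjnd
        rw [Finset.mem_Icc] at hx1 hx2
        refine Finset.mem_erase.mpr ⟨hjne, Finset.mem_filter.mpr ⟨Finset.mem_univ _, hjl, ?_⟩⟩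
        exact le_trans hx2.1 hx1.2
      have hi0mem : i0 ∈ Finset.univ.filter
          (fun i : I => t i - (r i : ℤ) + 1 ≤ m0 ∧ m0 ≤ t i) := by
        have := hr i0
        refine Finset.mem_filter.mpr ⟨Finset.mem_univ _, le_refl _, ?_⟩
        rw [hm0]; push_cast; omega
      have hNbcard : Nb.card < N := by
        calc Nb.card ≤ ((Finset.univ.filter
              (fun i : I => t i - (r i : ℤ) + 1 ≤ m0 ∧ m0 ≤ t i)).erase i0).card :=
              Finset.card_le_card hNbsub
          _ < (Finset.univ.filter
              (fun i : I => t i - (r i : ℤ) + 1 ≤ m0 ∧ m0 ≤ t i)).card :=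
              Finset.card_erase_lt_of_mem hi0mem
          _ ≤ N := hcount m0
      -- find a free color
      have hCcard : (Nb.image f').card < N := lt_of_le_of_lt Finset.card_image_le hNbcard
      have : ((Nb.image f')ᶜ).Nonempty := by
        rw [← Finset.card_pos, Finset.card_compl, Fintype.card_fin]
        omega
      obtain ⟨c, hc⟩ := this
      rw [Finset.mem_compl] at hc
      refine ⟨Function.update f' i0 c, ?_⟩
      intro i hi j hj hij hfij
      by_cases hii0 : i = i0
      · subst hii0
        have hjne : j ≠ i := hij.symm
        have hjs' : j ∈ s' := Finset.mem_erase.mpr ⟨hjne, hj⟩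
        rw [Function.update_self, Function.update_of_ne hjne] at hfij
        by_contra hnd
        have : j ∈ Nb := Finset.mem_filter.mpr ⟨hjs', fun h => hnd (Disjoint.symm h)⟩
        exact hc (Finset.mem_image.mpr ⟨j, this, hfij.symm⟩)
      · by_cases hji0 : j = i0
        · subst hji0
          have his' : i ∈ s' := Finset.mem_erase.mpr ⟨hii0, hi⟩
          rw [Function.update_self, Function.update_of_ne hii0] at hfij
          by_contra hnd
          have : i ∈ Nb := Finset.mem_filter.mpr ⟨his', hnd⟩
          exact hc (Finset.mem_image.mpr ⟨i, this, hfij⟩)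
        · rw [Function.update_of_ne hii0, Function.update_of_ne hji0] at hfij
          exact hf' i (Finset.mem_erase.mpr ⟨hii0, hi⟩) j (Finset.mem_erase.mpr ⟨hji0, hj⟩)
            hij hfij

/-- Time-indexed version of Proposition 1: with integer periods, route `i` arriving at period
`t i` with duration `r i ≥ 1` is in operation during periods `t i - r i + 1, …, t i`; the
minimum number of buses admitting an assignment with no two same-bus routes in operation in a
common period equals the maximum number of routes in operation in any period. -/
theorem min_buses_eq_max_simultaneous_routes_discrete
    {I : Type*} [Fintype I] [Nonempty I] (t : I → ℤ) (r : I → ℕ) (hr : ∀ i, 1 ≤ r i) :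
    sInf {k : ℕ | ∃ f : I → Fin k, ∀ i j : I, i ≠ j → f i = f j →
        Disjoint (Finset.Icc (t i - (r i : ℤ) + 1) (t i))
          (Finset.Icc (t j - (r j : ℤ) + 1) (t j))} =
      sSup {n : ℕ | ∃ m : ℤ,
        n = (Finset.univ.filter (fun i : I => t i - (r i : ℤ) + 1 ≤ m ∧ m ≤ t i)).card} := by
  classical
  set S := {k : ℕ | ∃ f : I → Fin k, ∀ i j : I, i ≠ j → f i = f j →
      Disjoint (Finset.Icc (t i - (r i : ℤ) + 1) (t i))
        (Finset.Icc (t j - (r j : ℤ) + 1) (t j))} with hS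
  set T := {n : ℕ | ∃ m : ℤ,
      n = (Finset.univ.filter (fun i : I => t i - (r i : ℤ) + 1 ≤ m ∧ m ≤ t i)).card} with hT
  have hTne : T.Nonempty := ⟨_, 0, rfl⟩
  have hTbdd : BddAbove T := by
    refine ⟨Fintype.card I, fun n hn => ?_⟩
    obtain ⟨m, rfl⟩ := hn
    exact (Finset.card_filter_le _ _).trans (le_of_eq (Finset.card_univ))
  set N := sSup T with hNdef
  have hcount : ∀ m : ℤ,
      (Finset.univ.filter (fun i : I => t i - (r i : ℤ) + 1 ≤ m ∧ m ≤ t i)).card ≤ N :=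
    fun m => le_csSup hTbdd ⟨m, rfl⟩
  have hN : 0 < N := by
    obtain ⟨i0⟩ := ‹Nonempty I›
    have h1 : i0 ∈ Finset.univ.filter
        (fun i : I => t i - (r i : ℤ) + 1 ≤ t i0 ∧ t i0 ≤ t i) := by
      have := hr i0
      refine Finset.mem_filter.mpr ⟨Finset.mem_univ _, ?_, le_refl _⟩
      push_cast; omega
    calc 0 < (Finset.univ.filter
        (fun i : I => t i - (r i : ℤ) + 1 ≤ t i0 ∧ t i0 ≤ t i)).card :=
          Finset.card_pos.mpr ⟨i0, h1⟩
      _ ≤ N := hcount (t i0)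
  -- N ∈ S via greedy coloring
  obtain ⟨f, hf⟩ := greedy_color_aux t r hr N hN hcount Finset.univ
  have hNS : N ∈ S := ⟨f, fun i j hij hfij =>
    hf i (Finset.mem_univ i) j (Finset.mem_univ j) hij hfij⟩
  -- N is a lower bound of S
  have hlb : ∀ k ∈ S, N ≤ k := by
    intro k hk
    obtain ⟨f, hf⟩ := hk
    obtain ⟨m, hm⟩ := Nat.sSup_mem hTne hTbdd
    rw [hNdef, hm]
    have hinj : Set.InjOn f (Finset.univ.filter
        (fun i : I => t i - (r i : ℤ) + 1 ≤ m ∧ m ≤ t i)) := by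
      intro i hi j hj hfij
      by_contra hij
      have hd := hf i j hij hfij
      rw [Finset.coe_filter] at hi hj
      obtain ⟨-, hi1, hi2⟩ := hi
      obtain ⟨-, hj1, hj2⟩ := hj
      exact Finset.disjoint_left.mp hd (Finset.mem_Icc.mpr ⟨hi1, hi2⟩)
        (Finset.mem_Icc.mpr ⟨hj1, hj2⟩)
    calc (Finset.univ.filter
        (fun i : I => t i - (r i : ℤ) + 1 ≤ m ∧ m ≤ t i)).card
        ≤ Fintype.card (Fin k) := Finset.card_le_card_of_injOn f
          (fun _ _ => Finset.mem_univ _) hinj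
      _ = k := Fintype.card_fin k
  exact le_antisymm (Nat.sInf_le hNS) (le_csInf ⟨N, hNS⟩ hlb)
end

section
/- Let N ≥ 1 and let x, y : Fin N → ℝ satisfy y_n ≤ x_n for every n, with y ≠ x. Then y↓ is strictly smaller than x↓ in the lexicographic order on Fin N → ℝ, where v↓ denotes the vector v with components rearranged in nonincreasing order. -/
/-- `sortDesc v` is `v` with its components rearranged in nonincreasing order:
its `j`-th component is the `j`-th largest component of `v`. -/
noncomputable def sortDesc {N : ℕ} (v : Fin N → ℝ) : Fin N → ℝ :=
  fun j => v (Tuple.sort v (Fin.rev j))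

/-! Lowering components can only lower each order statistic, and lowering one of them strictly
lowers the sum, which is invariant under sorting; so `sortDesc` is strictly monotone, and strict
monotonicity in the product order implies it in the lexicographic order. -/

open Finset

namespace Tuple

variable {n : ℕ} {α : Type*}

theorem card_filter_apply_le_comp_perm [LE α] [DecidableLE α] (f : Fin n → α)
    (σ : Equiv.Perm (Fin n)) (a : α) :
    #{i | (f ∘ σ) i ≤ a} = #{i | f i ≤ a} :=
  card_equiv σ (by simp)

/-- The `k`-th smallest entry is monotone in the tuple: it is the least `a` with more than `k`
entries `≤ a`, and lowering entries only increases these counts. -/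
theorem comp_sort_mono [LinearOrder α] {f g : Fin n → α} (h : f ≤ g) :
    f ∘ sort f ≤ g ∘ sort g := by
  intro k
  set a := (g ∘ sort g) k
  have hg : k < #{i | (g ∘ sort g) i ≤ a} :=
    (lt_card_le_iff_apply_le_of_monotone (monotone_sort g)).2 le_rfl
  have hgf : #{i | g i ≤ a} ≤ #{i | f i ≤ a} :=
    card_le_card (monotone_filter_right _ fun i _ hi => (h i).trans hi)
  rw [card_filter_apply_le_comp_perm] at hg
  rw [← card_filter_apply_le_comp_perm f (sort f)] at hgf
  exact (lt_card_le_iff_apply_le_of_monotone (monotone_sort f)).1 (hg.trans_le hgf)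

end Tuple

theorem sum_sortDesc {N : ℕ} (v : Fin N → ℝ) : ∑ j, sortDesc v j = ∑ j, v j :=
  (Equiv.sum_comp Fin.revPerm (v ∘ Tuple.sort v)).trans (Equiv.sum_comp (Tuple.sort v) v)

theorem sortDesc_mono {N : ℕ} : Monotone (sortDesc (N := N)) :=
  fun _ _ h j => Tuple.comp_sort_mono h (Fin.rev j)

theorem sortDesc_strictMono {N : ℕ} : StrictMono (sortDesc (N := N)) := by
  intro y x hlt
  refine (sortDesc_mono hlt.le).lt_of_ne fun h => ?_
  have hsum : ∑ i, y i < ∑ i, x i := Fintype.sum_strictMono hlt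
  rw [← sum_sortDesc y, ← sum_sortDesc x, h] at hsum
  exact hsum.false

theorem sortDesc_lt_of_le_of_ne_general {N : ℕ} (x y : Fin N → ℝ)
    (hle : ∀ n, y n ≤ x n) (hne : y ≠ x) :
    toLex (sortDesc y) < toLex (sortDesc x) :=
  Pi.toLex_strictMono (sortDesc_strictMono (lt_of_le_of_ne hle hne))

/-- If `y` dominates `x` componentwise (`y n ≤ x n` for all `n`) and `y ≠ x`, then the
nonincreasing rearrangement of `y` is strictly lexicographically smaller than that of `x`. -/
theorem sortDesc_lt_of_le_of_ne {N : ℕ} (hN : 1 ≤ N) (x y : Fin N → ℝ)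
    (hle : ∀ n, y n ≤ x n) (hne : y ≠ x) :
    toLex (sortDesc y) < toLex (sortDesc x) :=
  sortDesc_lt_of_le_of_ne_general x y hle hne
end

section
/- Let N ≥ 1 and let S be a nonempty finite set of vectors in Fin N → ℝ. Then there exists ε₀ > 0 such that for every ε with 0 < ε < ε₀, any x ∈ S minimizing the weighted sum Σ_{j=0}^{N−1} ε^j · x_j over S is a lexicographic minimum of S, i.e., x ≤ y in the lexicographic order on Fin N → ℝ for every y ∈ S. -/
/-!
Write `d = x - y`. If `toLex y < toLex x`, then `d` vanishes below some index `i` and `d i > 0`,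
so `∑ j, ε ^ j * d j = ε ^ i * g ε`, where `g ε = ∑ j, ε ^ (j - i) * d j` is a polynomial in `ε`
with `g 0 = d i > 0`. By continuity the weighted sum of `y` is strictly below that of `x` for all
small `ε > 0`, and since `S × S` is finite one threshold works for every pair.
-/

open Filter Topology

namespace WeightedSum

variable {N : ℕ}

def weightedSum (ε : ℝ) (x : Fin N → ℝ) : ℝ :=
  ∑ j : Fin N, ε ^ (j : ℕ) * x j

lemma weightedSum_sub_eq_pow_mul {x y : Fin N → ℝ} {i : Fin N} (hxy : ∀ j < i, y j = x j)
    (ε : ℝ) :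
    weightedSum ε x - weightedSum ε y =
      ε ^ (i : ℕ) * ∑ j : Fin N, ε ^ ((j : ℕ) - i) * (x j - y j) := by
  rw [weightedSum, weightedSum, ← Finset.sum_sub_distrib, Finset.mul_sum]
  refine Finset.sum_congr rfl fun j _ => ?_
  rcases lt_or_ge j i with hji | hij
  · simp [hxy j hji]
  · rw [← mul_assoc, pow_mul_pow_sub ε hij, mul_sub]

lemma sum_zero_pow_sub_mul {x y : Fin N → ℝ} {i : Fin N} (hxy : ∀ j < i, y j = x j) :
    ∑ j : Fin N, (0 : ℝ) ^ ((j : ℕ) - i) * (x j - y j) = x i - y i := by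
  rw [Finset.sum_eq_single i (fun j _ hji => ?_) (by simp)]
  · simp
  rcases lt_or_gt_of_ne hji with hji | hij
  · simp [hxy j hji]
  · simp [zero_pow (Nat.sub_ne_zero_of_lt hij)]

lemma eventually_weightedSum_lt {x y : Fin N → ℝ} (hyx : toLex y < toLex x) :
    ∀ᶠ ε in 𝓝[>] 0, weightedSum ε y < weightedSum ε x := by
  obtain ⟨i, hxy, hi⟩ := hyx
  replace hxy : ∀ j < i, y j = x j := hxy
  replace hi : y i < x i := hi
  set g : ℝ → ℝ := fun ε => ∑ j : Fin N, ε ^ ((j : ℕ) - i) * (x j - y j)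
  have hg : Tendsto g (𝓝 0) (𝓝 (x i - y i)) := by
    rw [← sum_zero_pow_sub_mul hxy]
    exact (continuous_finsetSum _ fun j _ => by fun_prop).tendsto 0
  have hg_pos : ∀ᶠ ε in 𝓝[>] 0, 0 < g ε :=
    nhdsWithin_le_nhds (hg.eventually_const_lt (sub_pos.2 hi))
  filter_upwards [hg_pos, self_mem_nhdsWithin] with ε hgε (hε : 0 < ε)
  rw [← sub_pos, weightedSum_sub_eq_pow_mul hxy]
  exact mul_pos (pow_pos hε _) hgε

lemma eventually_weightedSum_minimizer_lexMin (S : Finset (Fin N → ℝ)) :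
    ∀ᶠ ε in 𝓝[>] 0, ∀ x ∈ S, (∀ y ∈ S, weightedSum ε x ≤ weightedSum ε y) →
      ∀ y ∈ S, toLex x ≤ toLex y := by
  have hpairs : ∀ᶠ ε in 𝓝[>] 0, ∀ x ∈ S, ∀ y ∈ S,
      toLex y < toLex x → weightedSum ε y < weightedSum ε x := by
    simp only [eventually_all_finset, eventually_imp_distrib_left]
    exact fun x _ y _ => eventually_weightedSum_lt
  filter_upwards [hpairs] with ε hε x hx hmin y hy
  by_contra! hyx
  exact (hmin y hy).not_gt (hε x hx y hy hyx)

end WeightedSum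

open WeightedSum in
theorem weighted_sum_reduction_lexmin_general
    {N : ℕ} (S : Finset (Fin N → ℝ)) :
    ∃ ε₀ : ℝ, 0 < ε₀ ∧ ∀ ε : ℝ, 0 < ε → ε < ε₀ →
      ∀ x ∈ S, (∀ y ∈ S, ∑ j : Fin N, ε ^ (j : ℕ) * x j ≤ ∑ j : Fin N, ε ^ (j : ℕ) * y j) →
        ∀ y ∈ S, toLex x ≤ toLex y := by
  obtain ⟨ε₀, hε₀, h⟩ :=
    (nhdsGT_basis (0 : ℝ)).eventually_iff.1 (eventually_weightedSum_minimizer_lexMin S)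
  exact ⟨ε₀, hε₀, fun ε hε hε' => h ⟨hε, hε'⟩⟩

/-- Validity of the weighted-sum reduction of lexicographic minimization: for a nonempty
finite set `S` of vectors there is an `ε₀ > 0` such that for every `0 < ε < ε₀`, any
minimizer over `S` of the weighted sum `∑ j, ε ^ j * x j` is a lexicographic minimum of `S`. -/
theorem weighted_sum_reduction_lexmin
    {N : ℕ} (hN : 1 ≤ N) (S : Finset (Fin N → ℝ)) (hS : S.Nonempty) :
    ∃ ε₀ : ℝ, 0 < ε₀ ∧ ∀ ε : ℝ, 0 < ε → ε < ε₀ →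
      ∀ x ∈ S, (∀ y ∈ S, ∑ j : Fin N, ε ^ (j : ℕ) * x j ≤ ∑ j : Fin N, ε ^ (j : ℕ) * y j) →
        ∀ y ∈ S, toLex x ≤ toLex y :=
  weighted_sum_reduction_lexmin_general S
end

section
/- (Correctness of the ranking constraints (3.3)–(3.4).) Let N ≥ 1, let π : Fin N → ℝ, let j ∈ {1, …, N}, let t ∈ ℝ, and let c̃ ∈ ℝ satisfy c̃ ≥ (max_n π_n) − (min_n π_n). Then the following are equivalent: (i) there exists h : Fin N → {0, 1} with Σ_n h_n ≥ N + 1 − j and c̃ · (1 − h_n) ≥ π_n − t for every n; (ii) at least N + 1 − j indices n satisfy π_n ≤ t; (iii) t ≥ π↓_j, the j-th largest component of π. -/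
open Finset

section Sorting

variable {α : Type*} [LinearOrder α]

theorem Monotone.lt_card_filter_le_iff {N : ℕ} {f : Fin N → α} (hf : Monotone f) (t : α)
    (k : Fin N) : (k : ℕ) < #{i | f i ≤ t} ↔ f k ≤ t := by
  constructor
  · intro hk
    by_contra! htk
    have hsub : ({i | f i ≤ t} : Finset _) ⊆ Iio k := fun i hi ↦
      mem_Iio.2 (hf.reflect_lt ((mem_filter.1 hi).2.trans_lt htk))
    have := card_le_card hsub
    rw [Fin.card_Iio] at this
    omega
  · intro hk
    have hsub : Iic k ⊆ ({i | f i ≤ t} : Finset _) := fun i hi ↦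
      mem_filter.2 ⟨mem_univ i, (hf (mem_Iic.1 hi)).trans hk⟩
    have := card_le_card hsub
    rw [Fin.card_Iic] at this
    omega

theorem lt_card_filter_le_iff_sort {N : ℕ} (v : Fin N → α) (t : α) (k : Fin N) :
    (k : ℕ) < #{n | v n ≤ t} ↔ v (Tuple.sort v k) ≤ t := by
  have hcard : #{i | v (Tuple.sort v i) ≤ t} = #{n | v n ≤ t} :=
    card_equiv (Tuple.sort v) (by simp)
  rw [← hcard]
  exact (Tuple.monotone_sort v).lt_card_filter_le_iff t k

end Sorting

theorem sortDesc_le_iff {N : ℕ} (v : Fin N → ℝ) (t : ℝ) (j : Fin N) :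
    sortDesc v j ≤ t ↔ N - j ≤ #{n | v n ≤ t} := by
  rw [sortDesc, ← lt_card_filter_le_iff_sort, Fin.val_rev]
  omega

theorem sum_eq_card_filter_of_binary {ι : Type*} [Fintype ι] {h : ι → ℝ}
    (hh : ∀ n, h n = 0 ∨ h n = 1) : ∑ n, h n = #{n | h n = 1} := by
  rw [← sum_boole]
  refine sum_congr rfl fun n _ ↦ ?_
  rcases hh n with h0 | h1 <;> simp [*]

theorem exists_binary_bigM_iff_le_card_filter {ι : Type*} [Fintype ι] (π : ι → ℝ) (t c : ℝ)
    (hc : ∀ a b, π a - π b ≤ c) {k : ℕ} (hk : 0 < k) :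
    (∃ h : ι → ℝ, (∀ n, h n = 0 ∨ h n = 1) ∧ (k : ℝ) ≤ ∑ n, h n ∧
        ∀ n, π n - t ≤ c * (1 - h n)) ↔ k ≤ #{n | π n ≤ t} := by
  constructor
  · rintro ⟨h, hbin, hsum, hbigM⟩
    have hsub : ({n | h n = 1} : Finset ι) ⊆ ({n | π n ≤ t} : Finset ι) := fun n hn ↦ by
      have := hbigM n
      rw [(mem_filter.1 hn).2, sub_self, mul_zero] at this
      exact mem_filter.2 ⟨mem_univ n, by linarith⟩
    rw [sum_eq_card_filter_of_binary hbin] at hsum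
    exact (Nat.cast_le.1 hsum).trans (card_le_card hsub)
  · intro hcard
    obtain ⟨m, hm⟩ : ({n | π n ≤ t} : Finset ι).Nonempty := card_pos.1 (hk.trans_le hcard)
    refine ⟨fun n ↦ if π n ≤ t then 1 else 0, fun n ↦ by dsimp only; split_ifs <;> simp, ?_,
      fun n ↦ ?_⟩
    · rw [sum_boole]
      exact_mod_cast hcard
    · dsimp only
      split_ifs with hn
      · linarith
      · linarith [hc n m, (mem_filter.1 hm).2]

/-- Correctness of the ranking constraints (3.3)–(3.4): for disutilities `π`, a rank
`j ∈ {1, …, N}`, a bound `t`, and `c̃` at least the spread `max π - min π`, the following are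
equivalent: (i) some binary `h` satisfies `∑ n, h n ≥ N + 1 - j` and
`c̃ * (1 - h n) ≥ π n - t` for all `n`; (ii) at least `N + 1 - j` indices satisfy `π n ≤ t`;
(iii) `t` is at least the `j`-th largest component of `π`. -/
theorem ranking_constraints_correct
    {N : ℕ} (hN : 1 ≤ N) (π : Fin N → ℝ) (j : ℕ) (hj1 : 1 ≤ j) (hjN : j ≤ N)
    (t : ℝ) (c : ℝ)
    (hc : Finset.univ.sup' (Finset.univ_nonempty_iff.mpr ⟨⟨0, hN⟩⟩) π -
        Finset.univ.inf' (Finset.univ_nonempty_iff.mpr ⟨⟨0, hN⟩⟩) π ≤ c) :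
    ((∃ h : Fin N → ℝ, (∀ n, h n = 0 ∨ h n = 1) ∧
        ((N : ℝ) + 1 - j ≤ ∑ n, h n) ∧ ∀ n, π n - t ≤ c * (1 - h n)) ↔
      N + 1 - j ≤ (Finset.univ.filter (fun n : Fin N => π n ≤ t)).card) ∧
    ((N + 1 - j ≤ (Finset.univ.filter (fun n : Fin N => π n ≤ t)).card) ↔
      sortDesc π ⟨j - 1, by omega⟩ ≤ t) := by
  have hspread : ∀ a b, π a - π b ≤ c := fun a b ↦
    le_trans (sub_le_sub (le_sup' π (mem_univ a)) (inf'_le π (mem_univ b))) hc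
  have hcast : ((N + 1 - j : ℕ) : ℝ) = (N : ℝ) + 1 - j := by
    rw [Nat.cast_sub (by omega), Nat.cast_add_one]
  refine ⟨?_, ?_⟩
  · rw [← hcast]
    exact exists_binary_bigM_iff_le_card_filter π t c hspread (by omega)
  · rw [sortDesc_le_iff, show N - (j - 1) = N + 1 - j by omega]
end

section
/- Let N ≥ 1, let π : Fin N → ℝ, and let c̃ ∈ ℝ satisfy c̃ ≥ (max_n π_n) − (min_n π_n). Define ψ* : Fin N → ℝ by ψ*_j = π↓_j, the j-th largest component of π. Then: (a) ψ* is nonincreasing in j; (b) for every j ∈ {1, …, N} there exists h : Fin N → {0, 1} with Σ_n h_n ≥ N + 1 − j and c̃ · (1 − h_n) ≥ π_n − ψ*_j for every n; and (c) any ψ : Fin N → ℝ such that for every j some h : Fin N → {0, 1} satisfies Σ_n h_n ≥ N + 1 − j and c̃ · (1 − h_n) ≥ π_n − ψ_j for every n must satisfy ψ_j ≥ ψ*_j for every j. In particular, ψ* is the componentwise-minimal vector feasible for the ranking constraints. -/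
/-!
Since `c * (1 - 1) = 0`, a school with `h n = 1` must have `π n ≤ ψ_j`, while schools with
`h n = 0` are unconstrained once `c` exceeds the spread of `π`. So `ψ_j` is feasible exactly
when at least `N - j` components of `π` are `≤ ψ_j`, and the least such value is the
`(j + 1)`-th largest component.
-/

open Finset

/-- The ranking constraints of the integer program for one rank, with `t` in the role of `ψ_j`
and `k` in that of `N + 1 - j`. -/
def IsRankingFeasible {ι : Type*} [Fintype ι] (π : ι → ℝ) (c t k : ℝ) : Prop :=
  ∃ h : ι → ℝ, (∀ n, h n = 0 ∨ h n = 1) ∧ k ≤ ∑ n, h n ∧ ∀ n, π n - t ≤ c * (1 - h n)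

section Feasibility

variable {ι : Type*} [Fintype ι] {π : ι → ℝ} {c t k : ℝ}

theorem IsRankingFeasible.le_card_filter (hfeas : IsRankingFeasible π c t k) :
    k ≤ #{n | π n ≤ t} := by
  classical
  obtain ⟨h, hbin, hsum, hcon⟩ := hfeas
  have hle : ∀ n, h n ≤ if π n ≤ t then 1 else 0 := by
    intro n
    rcases hbin n with h0 | h1
    · rw [h0]; split_ifs <;> norm_num
    · have := hcon n
      rw [h1, sub_self, mul_zero, sub_nonpos] at this
      simp [this, h1]
  calc k ≤ ∑ n, h n := hsum
    _ ≤ ∑ n, if π n ≤ t then (1 : ℝ) else 0 := sum_le_sum fun n _ => hle n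
    _ = #{n | π n ≤ t} := by rw [sum_boole]

theorem isRankingFeasible_of_le_card_filter (hk : k ≤ #{n | π n ≤ t})
    (hc : ∀ n, π n - t ≤ c) : IsRankingFeasible π c t k := by
  classical
  refine ⟨fun n => if π n ≤ t then 1 else 0, fun n => ?_, by rwa [sum_boole], fun n => ?_⟩
  · dsimp only
    split_ifs <;> simp
  · dsimp only
    split_ifs with hn
    · simpa using hn
    · simpa using hc n

end Feasibility

section SortDesc

variable {N : ℕ} (v : Fin N → ℝ)

theorem sortDesc_antitone : Antitone (sortDesc v) :=
  fun _ _ hij => Tuple.monotone_sort v (Fin.rev_le_rev.mpr hij)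

/-- The `N - j` smallest components of `v` are all at most `sortDesc v j`. -/
theorem le_add_card_filter_le_sortDesc (j : Fin N) : N ≤ j + #{n | v n ≤ sortDesc v j} := by
  have hsub : (Iic (Fin.rev j)).map (Tuple.sort v).toEmbedding ⊆
      ({n | v n ≤ sortDesc v j} : Finset (Fin N)) := by
    intro n hn
    obtain ⟨i, hi, rfl⟩ := mem_map.mp hn
    exact mem_filter.mpr ⟨mem_univ _, Tuple.monotone_sort v (mem_Iic.mp hi)⟩
  have hcard := card_le_card hsub
  rw [card_map, Fin.card_Iic, Fin.val_rev] at hcard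
  omega

/-- If `t < sortDesc v j`, only the `N - 1 - j` components strictly below rank `j` can be `≤ t`. -/
theorem sortDesc_le_of_le_add_card_filter (j : Fin N) {t : ℝ}
    (ht : N ≤ j + #{n | v n ≤ t}) : sortDesc v j ≤ t := by
  by_contra! hlt
  have hsub : ({n | v n ≤ t} : Finset (Fin N)) ⊆
      (Iio (Fin.rev j)).map (Tuple.sort v).toEmbedding := by
    intro n hn
    refine mem_map.mpr ⟨(Tuple.sort v).symm n, mem_Iio.mpr ?_, Equiv.apply_symm_apply _ n⟩
    refine (Tuple.monotone_sort v).reflect_lt ?_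
    simpa [sortDesc] using (mem_filter.mp hn).2.trans_lt hlt
  have hcard := card_le_card hsub
  rw [card_map, Fin.card_Iio, Fin.val_rev] at hcard
  omega

end SortDesc

/-- The vector `ψ* = π↓` of ranked disutilities (here the index `j : Fin N` is 0-based, so the
paper's rank is `j + 1` and `N + 1 - (j + 1) = N - j`) is the componentwise-minimal vector
feasible for the ranking constraints (3.3)–(3.4): (a) it is nonincreasing; (b) it is feasible,
i.e. for each `j` some binary `h` satisfies `∑ n, h n ≥ N - j` and
`c̃ * (1 - h n) ≥ π n - ψ*_j`; (c) any feasible `ψ` dominates it componentwise. -/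
theorem ranked_disutilities_minimal_feasible
    {N : ℕ} (hN : 1 ≤ N) (π : Fin N → ℝ) (c : ℝ)
    (hc : Finset.univ.sup' (Finset.univ_nonempty_iff.mpr ⟨⟨0, hN⟩⟩) π -
        Finset.univ.inf' (Finset.univ_nonempty_iff.mpr ⟨⟨0, hN⟩⟩) π ≤ c) :
    Antitone (sortDesc π) ∧
    (∀ j : Fin N, ∃ h : Fin N → ℝ, (∀ n, h n = 0 ∨ h n = 1) ∧
      ((N : ℝ) - (j : ℕ) ≤ ∑ n, h n) ∧ ∀ n, π n - sortDesc π j ≤ c * (1 - h n)) ∧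
    (∀ ψ : Fin N → ℝ,
      (∀ j : Fin N, ∃ h : Fin N → ℝ, (∀ n, h n = 0 ∨ h n = 1) ∧
        ((N : ℝ) - (j : ℕ) ≤ ∑ n, h n) ∧ ∀ n, π n - ψ j ≤ c * (1 - h n)) →
      ∀ j : Fin N, sortDesc π j ≤ ψ j) := by
  refine ⟨sortDesc_antitone π, fun j => ?_, fun ψ hfeas j => ?_⟩
  · refine isRankingFeasible_of_le_card_filter ?_ fun n => ?_
    · rw [sub_le_iff_le_add']
      exact_mod_cast le_add_card_filter_le_sortDesc π j
    · have hsup := le_sup' π (mem_univ n)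
      have hinf := inf'_le π (mem_univ (Tuple.sort π (Fin.rev j)))
      exact (sub_le_sub hsup hinf).trans hc
  · have hcount := IsRankingFeasible.le_card_filter (hfeas j)
    rw [sub_le_iff_le_add'] at hcount
    exact sortDesc_le_of_le_add_card_filter π j (by exact_mod_cast hcount)
end

section
/- Let M, N ∈ ℕ and integers α ≥ β ≥ 0 with β + 1 ≤ M, and for each school n ∈ {1, …, N} a finite set of routes i with durations r_{i,n} ≥ 1. Suppose binary variables u_n(m) for m ∈ {β+1, …, M} and x_{i,n}(t) for t ∈ {1, …, M}, together with z ∈ ℕ, satisfy: (1.1) Σ_{m=β+1}^{M} u_n(m) = 1 for all n; (1.2) u_n(m) ≤ Σ_{t = max(m−α,1)}^{m−β} x_{i,n}(t) for all n, i, and m ∈ {β+1, …, M}; and (1.3) Σ_n Σ_i Σ_{t=m}^{min(m + r_{i,n} − 1, M)} x_{i,n}(t) ≤ z for all m ∈ {1, …, M}. Then there exist binary variables x'_{i,n}(t) with x'_{i,n}(t) ≤ x_{i,n}(t) for all i, n, t, such that Σ_{t=1}^{M} x'_{i,n}(t) = 1 for every route i of every school n, and (u, x', z) still satisfies constraints (1.1),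 (1.2), and (1.3). -/
/-- From any feasible solution of constraints (1.1)–(1.3) of the time-indexed ILP, a single
arrival time per route can be selected while preserving feasibility and the bus count `z`:
there exist binary `x'` with `x' ≤ x` pointwise such that each route has exactly one arrival
time (constraint (1.6)) and `(u, x', z)` still satisfies (1.1), (1.2), and (1.3). -/
theorem select_single_arrival_time
    (M N : ℕ) (α β : ℕ) (hαβ : β ≤ α) (hβM : β + 1 ≤ M)
    (R : Fin N → ℕ) (r : (n : Fin N) → Fin (R n) → ℕ) (hr : ∀ n i, 1 ≤ r n i)
    (u : Fin N → ℕ → ℝ) (x : (n : Fin N) → Fin (R n) → ℕ → ℝ) (z : ℕ)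
    (hu01 : ∀ n m, u n m = 0 ∨ u n m = 1)
    (hx01 : ∀ n i t, x n i t = 0 ∨ x n i t = 1)
    (h11 : ∀ n, ∑ m ∈ Finset.Icc (β + 1) M, u n m = 1)
    (h12 : ∀ n i m, β + 1 ≤ m → m ≤ M →
      u n m ≤ ∑ t ∈ Finset.Icc (max (m - α) 1) (m - β), x n i t)
    (h13 : ∀ m, 1 ≤ m → m ≤ M →
      ∑ n, ∑ i, ∑ t ∈ Finset.Icc m (min (m + r n i - 1) M), x n i t ≤ (z : ℝ)) :
    ∃ x' : (n : Fin N) → Fin (R n) → ℕ → ℝ,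
      (∀ n i t, x' n i t = 0 ∨ x' n i t = 1) ∧
      (∀ n i t, x' n i t ≤ x n i t) ∧
      (∀ n i, ∑ t ∈ Finset.Icc 1 M, x' n i t = 1) ∧
      (∀ n, ∑ m ∈ Finset.Icc (β + 1) M, u n m = 1) ∧
      (∀ n i m, β + 1 ≤ m → m ≤ M →
        u n m ≤ ∑ t ∈ Finset.Icc (max (m - α) 1) (m - β), x' n i t) ∧
      (∀ m, 1 ≤ m → m ≤ M →
        ∑ n, ∑ i, ∑ t ∈ Finset.Icc m (min (m + r n i - 1) M), x' n i t ≤ (z : ℝ)) := by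
  -- nonnegativity helpers
  have hx0 : ∀ n i t, 0 ≤ x n i t := by
    intro n i t; rcases hx01 n i t with h | h <;> rw [h] <;> norm_num
  have hu0 : ∀ n m, 0 ≤ u n m := by
    intro n m; rcases hu01 n m with h | h <;> rw [h] <;> norm_num
  -- choose for each school the unique start time
  have hm : ∀ n : Fin N, ∃ m ∈ Finset.Icc (β + 1) M, u n m = 1 := by
    intro n
    have hne : ∑ m ∈ Finset.Icc (β + 1) M, u n m ≠ 0 := by rw [h11 n]; norm_num
    obtain ⟨m, hm, hne⟩ := Finset.exists_ne_zero_of_sum_ne_zero hne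
    exact ⟨m, hm, (hu01 n m).resolve_left hne⟩
  choose ms hms hums using hm
  -- uniqueness of the start time
  have huniq : ∀ (n : Fin N) (m : ℕ), m ∈ Finset.Icc (β + 1) M → u n m = 1 → m = ms n := by
    intro n m hmem hum
    by_contra hne
    have h1 : u n (ms n) + ∑ k ∈ (Finset.Icc (β + 1) M).erase (ms n), u n k
        = ∑ k ∈ Finset.Icc (β + 1) M, u n k := Finset.add_sum_erase _ _ (hms n)
    have h2 : u n m ≤ ∑ k ∈ (Finset.Icc (β + 1) M).erase (ms n), u n k :=
      Finset.single_le_sum (fun k _ => hu0 n k) (Finset.mem_erase.2 ⟨hne, hmem⟩)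
    rw [h11 n, hums n, hum] at *
    linarith
  -- choose for each route an arrival time in the window of its school's start
  have hts : ∀ (n : Fin N) (i : Fin (R n)),
      ∃ t ∈ Finset.Icc (max (ms n - α) 1) (ms n - β), x n i t = 1 := by
    intro n i
    obtain ⟨h1, h2⟩ := Finset.mem_Icc.mp (hms n)
    have hle := h12 n i (ms n) h1 h2
    rw [hums n] at hle
    have hne : ∑ t ∈ Finset.Icc (max (ms n - α) 1) (ms n - β), x n i t ≠ 0 := by
      intro h; rw [h] at hle; linarith
    obtain ⟨t, ht, htne⟩ := Finset.exists_ne_zero_of_sum_ne_zero hne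
    exact ⟨t, ht, (hx01 n i t).resolve_left htne⟩
  choose ts hts hxts using hts
  -- the chosen time lies in [1, M]
  have htsM : ∀ n i, ts n i ∈ Finset.Icc 1 M := by
    intro n i
    obtain ⟨h1, h2⟩ := Finset.mem_Icc.mp (hts n i)
    obtain ⟨hm1, hm2⟩ := Finset.mem_Icc.mp (hms n)
    refine Finset.mem_Icc.2 ⟨le_trans (le_max_right _ _) h1, h2.trans ?_⟩
    omega
  refine ⟨fun n i t => if t = ts n i then 1 else 0, ?_, ?_, ?_, h11, ?_, ?_⟩
  · intro n i t; by_cases h : t = ts n i <;> simp [h]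
  · intro n i t
    by_cases h : t = ts n i
    · simp [h, hxts n i]
    · simpa [h] using hx0 n i t
  · intro n i
    rw [Finset.sum_ite_eq' (Finset.Icc 1 M) (ts n i) (fun _ => (1 : ℝ))]
    simp [htsM n i]
  · intro n i m hm1 hm2
    rcases hu01 n m with h | h
    · rw [h]
      exact Finset.sum_nonneg fun t _ => by positivity
    · rw [h, huniq n m (Finset.mem_Icc.2 ⟨hm1, hm2⟩) h]
      calc (1 : ℝ) = if ts n i = ts n i then 1 else 0 := by simp
        _ ≤ _ := Finset.single_le_sum (f := fun t => if t = ts n i then (1:ℝ) else 0)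
              (fun t _ => by positivity) (hts n i)
  · intro m hm1 hm2
    refine le_trans ?_ (h13 m hm1 hm2)
    refine Finset.sum_le_sum fun n _ => Finset.sum_le_sum fun i _ =>
      Finset.sum_le_sum fun t _ => ?_
    by_cases h : t = ts n i
    · simp [h, hxts n i]
    · simpa [h] using hx0 n i t
end
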